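/- arXiv:1808.09057 — 8 statements merged into one kernel-verified Lean document; each statement's English description precedes it below -/
import Mathlib

section
/- Fix p ∈ (1,∞). For every such p there exists a real number z > 1 such that the (unique) global minimizer (f̂₁, f̂₂) of G_z over ℝ² satisfies f̂₁ < f̂₂. (This is the core of the paper's Lemma 2: L(p,1) aggregation with p ∈ (1,∞) violates efficiency, since the paper's two-paper, three-reviewer construction reduces exactly to minimizing G_z.) -/
/-!
`G_z` is a sum of three `ℓᵖ` norms of affine images of `f`. It is coercive, so it has a
minimizer, and the minimizer is unique: at the midpoint of two minimizers each of the three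
Minkowski inequalities is an equality, and since `ℓᵖ` is strictly convex the three pairs of
vectors are then parallel, which pins the two points together.

Suppose the minimizer `(a, b)` had `b ≤ a`. Clamping `b` to `[0, 1]` does not increase `G_z`,
so `0 ≤ b ≤ 1`; comparing with `(0, 1/2)` gives `a ≤ 3/2`; and `G_z` decreases at rate
`2 - 2^{1/p}` along the diagonal at the origin, so `a > 0`. The two partial derivatives vanish.
Written in terms of the gradients `(σᵢ, τᵢ)` of the three norms, which are unit vectors of `ℓ^q`
with `q = p / (p - 1)`, this says `σ₁ + σ₂ = σ₃ ≤ 1` and `τ₁ + τ₃ = τ₂`. The vector `(z - a, b)`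
of the first paper is long, so `τ₃ ≤ (z - 3/2)^{1-p}` is small. Then `τ₂ ≈ τ₁`, hence
`σ₂ ≈ σ₁ ≥ 2^{-1/q}`, and so `σ₁ + σ₂ ≈ 2^{1/p} > 1`, which is a contradiction once `z` is large.
-/

open Real Filter Set Topology

/-- The `L(p,1)` loss of the aggregate scores `(f₁, f₂)` for two papers whose three
reviewers give overall recommendations `(z, 0, 0)` and `(0, 1, 0)` respectively. -/
noncomputable def G (p z : ℝ) (f : ℝ × ℝ) : ℝ :=
  (|z - f.1| ^ p + |f.2| ^ p) ^ (1 / p) +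
    (|f.1| ^ p + |1 - f.2| ^ p) ^ (1 / p) +
    (|f.1| ^ p + |f.2| ^ p) ^ (1 / p)

noncomputable def pNorm (p : ℝ) (v : ℝ × ℝ) : ℝ := (|v.1| ^ p + |v.2| ^ p) ^ (1 / p)

theorem G_eq_pNorm (p z : ℝ) (f : ℝ × ℝ) :
    G p z f = pNorm p (z - f.1, f.2) + pNorm p (f.1, 1 - f.2) + pNorm p f := rfl

section pNorm

variable {p : ℝ}

theorem pNorm_nonneg (p : ℝ) (v : ℝ × ℝ) : 0 ≤ pNorm p v := by
  unfold pNorm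
  positivity

theorem pNorm_rpow (hp : p ≠ 0) (v : ℝ × ℝ) : pNorm p v ^ p = |v.1| ^ p + |v.2| ^ p := by
  rw [pNorm, one_div, rpow_inv_rpow (by positivity) hp]

theorem rpow_one_div_rpow_abs (hp : p ≠ 0) (x : ℝ) : (|x| ^ p) ^ (1 / p) = |x| := by
  rw [← rpow_mul (abs_nonneg x), mul_one_div_cancel hp, rpow_one]

theorem pNorm_eq_norm (hp : 0 < p) (v : ℝ × ℝ) :
    pNorm p v = ‖WithLp.toLp (ENNReal.ofReal p) v‖ := by
  rw [WithLp.prod_norm_eq_add (by rwa [ENNReal.toReal_ofReal hp.le])]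
  simp [pNorm, ENNReal.toReal_ofReal hp.le]

theorem pNorm_add_le (hp : 1 ≤ p) (u v : ℝ × ℝ) :
    pNorm p (u + v) ≤ pNorm p u + pNorm p v := by
  have : Fact (1 ≤ ENNReal.ofReal p) := ⟨by simpa using hp⟩
  simp only [pNorm_eq_norm (one_pos.trans_le hp), WithLp.toLp_add]
  exact norm_add_le _ _

theorem pNorm_smul (hp : p ≠ 0) (c : ℝ) (v : ℝ × ℝ) : pNorm p (c • v) = |c| * pNorm p v := by
  simp only [pNorm, Prod.smul_fst, Prod.smul_snd, smul_eq_mul, abs_mul,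
    mul_rpow (abs_nonneg c) (abs_nonneg _), ← mul_add]
  rw [mul_rpow (by positivity) (by positivity), rpow_one_div_rpow_abs hp]

theorem abs_fst_le_pNorm (hp : 0 < p) (v : ℝ × ℝ) : |v.1| ≤ pNorm p v := by
  rw [← rpow_one_div_rpow_abs hp.ne' v.1, pNorm]
  gcongr
  exact le_add_of_nonneg_right (by positivity)

theorem abs_snd_le_pNorm (hp : 0 < p) (v : ℝ × ℝ) : |v.2| ≤ pNorm p v := by
  rw [← rpow_one_div_rpow_abs hp.ne' v.2, pNorm]
  gcongr
  exact le_add_of_nonneg_left (by positivity)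

theorem pNorm_pos_of_fst_pos (hp : 0 < p) {x : ℝ} (hx : 0 < x) (y : ℝ) : 0 < pNorm p (x, y) :=
  hx.trans_le ((le_abs_self x).trans (abs_fst_le_pNorm hp (x, y)))

theorem pNorm_le_pNorm_of_abs_le (hp : 0 ≤ p) {x y y' : ℝ} (hy : |y| ≤ |y'|) :
    pNorm p (x, y) ≤ pNorm p (x, y') := by
  unfold pNorm
  gcongr

theorem pNorm_mk_zero (hp : p ≠ 0) (x : ℝ) : pNorm p (x, 0) = |x| := by
  rw [pNorm, abs_zero, zero_rpow hp, add_zero, rpow_one_div_rpow_abs hp]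

theorem pNorm_zero_mk (hp : p ≠ 0) (y : ℝ) : pNorm p (0, y) = |y| := by
  rw [pNorm, abs_zero, zero_rpow hp, zero_add, rpow_one_div_rpow_abs hp]

theorem pNorm_diag (hp : p ≠ 0) (t : ℝ) : pNorm p (t, t) = 2 ^ (1 / p) * |t| := by
  rw [pNorm, ← two_mul, mul_rpow zero_le_two (by positivity), rpow_one_div_rpow_abs hp]

theorem strictConvexOn_abs_rpow (hp : 1 < p) : StrictConvexOn ℝ univ fun x : ℝ => |x| ^ p := by
  refine ⟨convex_univ, fun x _ y _ hxy a b ha hb hab => ?_⟩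
  simp only [smul_eq_mul]
  by_cases habs : |x| = |y|
  · have hyx : y = -x := by
      rcases abs_eq_abs.1 habs with h | h
      · exact absurd h hxy
      · linarith
    have hx : x ≠ 0 := fun h => hxy (by rw [hyx, h, neg_zero])
    have hlt : |a * x + b * y| < |x| := by
      rw [hyx, show a * x + b * -x = (a - b) * x by ring, abs_mul]
      exact mul_lt_of_lt_one_left (abs_pos.2 hx) (abs_sub_lt_iff.2 ⟨by linarith, by linarith⟩)
    calc |a * x + b * y| ^ p < |x| ^ p := by gcongr
      _ = a * |x| ^ p + b * |y| ^ p := by rw [← habs, ← add_mul, hab, one_mul]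
  · calc |a * x + b * y| ^ p ≤ (a * |x| + b * |y|) ^ p := by
          gcongr
          exact (abs_add_le _ _).trans_eq (by rw [abs_mul, abs_mul, abs_of_pos ha, abs_of_pos hb])
      _ < a * |x| ^ p + b * |y| ^ p :=
          (strictConvexOn_rpow hp).2 (abs_nonneg x) (abs_nonneg y) habs ha hb hab

theorem pNorm_half_add_lt_one (hp : 1 < p) {u v : ℝ × ℝ} (hu : pNorm p u = 1)
    (hv : pNorm p v = 1) (huv : u ≠ v) :
    pNorm p ((1 / 2 : ℝ) • u + (1 / 2 : ℝ) • v) < 1 := by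
  have hp0 : 0 < p := by linarith
  have hu' := pNorm_rpow hp0.ne' u
  have hv' := pNorm_rpow hp0.ne' v
  rw [hu, one_rpow] at hu'
  rw [hv, one_rpow] at hv'
  have hf := strictConvexOn_abs_rpow hp
  have hle : ∀ x y : ℝ, |1 / 2 * x + 1 / 2 * y| ^ p ≤ 1 / 2 * |x| ^ p + 1 / 2 * |y| ^ p :=
    fun x y => hf.convexOn.2 trivial trivial (by norm_num) (by norm_num) (by norm_num)
  have hlt : ∀ x y : ℝ, x ≠ y →
      |1 / 2 * x + 1 / 2 * y| ^ p < 1 / 2 * |x| ^ p + 1 / 2 * |y| ^ p :=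
    fun x y h => hf.2 trivial trivial h (by norm_num) (by norm_num) (by norm_num)
  refine rpow_lt_one (by positivity) ?_ (by positivity)
  simp only [Prod.fst_add, Prod.snd_add, Prod.smul_fst, Prod.smul_snd, smul_eq_mul]
  by_cases h₁ : u.1 = v.1
  · have h₂ : u.2 ≠ v.2 := fun h₂ => huv (Prod.ext h₁ h₂)
    linarith [hle u.1 v.1, hlt u.2 v.2 h₂]
  · linarith [hlt u.1 v.1 h₁, hle u.2 v.2]

theorem strictConvexSpace_withLp_prod (hp : 1 < p) [Fact (1 ≤ ENNReal.ofReal p)] :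
    StrictConvexSpace ℝ (WithLp (ENNReal.ofReal p) (ℝ × ℝ)) := by
  have hp0 : 0 < p := by linarith
  refine StrictConvexSpace.of_norm_combo_lt_one fun x y hx hy hxy =>
    ⟨1 / 2, 1 / 2, by norm_num, ?_⟩
  rw [← WithLp.toLp_ofLp (x := x), ← pNorm_eq_norm hp0] at hx
  rw [← WithLp.toLp_ofLp (x := y), ← pNorm_eq_norm hp0] at hy
  rw [← WithLp.toLp_ofLp (x := x), ← WithLp.toLp_ofLp (x := y), ← WithLp.toLp_smul,
    ← WithLp.toLp_smul, ← WithLp.toLp_add, ← pNorm_eq_norm hp0]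
  exact pNorm_half_add_lt_one hp hx hy (WithLp.ofLp_injective _ |>.ne hxy)

theorem SameRay.fst_mul_snd_eq {u v : ℝ × ℝ} (h : SameRay ℝ u v) : u.1 * v.2 = u.2 * v.1 := by
  obtain ⟨w, a, b, -, -, -, rfl, rfl⟩ := h.exists_eq_smul
  simp only [Prod.smul_fst, Prod.smul_snd, smul_eq_mul]
  ring

theorem fst_mul_snd_eq_of_pNorm_add_eq (hp : 1 < p) {u v : ℝ × ℝ}
    (h : pNorm p (u + v) = pNorm p u + pNorm p v) : u.1 * v.2 = u.2 * v.1 := by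
  have : Fact (1 ≤ ENNReal.ofReal p) := ⟨by simpa using hp.le⟩
  have := strictConvexSpace_withLp_prod hp
  simp only [pNorm_eq_norm (by linarith : 0 < p), WithLp.toLp_add] at h
  exact ((sameRay_iff_norm_add.2 h).map
    (WithLp.linearEquiv _ ℝ (ℝ × ℝ)).toLinearMap).fst_mul_snd_eq

theorem abs_rpow_sub_two_mul_self (hp : 1 < p) {x : ℝ} (hx : 0 ≤ x) :
    |x| ^ (p - 2) * x = x ^ (p - 1) := by
  rcases hx.eq_or_lt with rfl | hx
  · rw [mul_zero, zero_rpow (by linarith)]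
  · rw [abs_of_pos hx, show p - 1 = p - 2 + 1 by ring, rpow_add_one hx.ne']

theorem hasDerivAt_pNorm (hp : 1 < p) {u v : ℝ → ℝ} {u' v' t : ℝ} (hu : HasDerivAt u u' t)
    (hv : HasDerivAt v v' t) (hu0 : 0 ≤ u t) (hv0 : 0 ≤ v t) (hN : 0 < pNorm p (u t, v t)) :
    HasDerivAt (fun s => pNorm p (u s, v s))
      ((u t / pNorm p (u t, v t)) ^ (p - 1) * u' +
        (v t / pNorm p (u t, v t)) ^ (p - 1) * v') t := by
  have hp0 : 0 < p := by linarith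
  set N := pNorm p (u t, v t)
  have hS : |u t| ^ p + |v t| ^ p = N ^ p := (pNorm_rpow hp0.ne' (u t, v t)).symm
  have h : HasDerivAt (fun s => pNorm p (u s, v s))
      ((p * |u t| ^ (p - 2) * u t * u' + p * |v t| ^ (p - 2) * v t * v') * (1 / p) *
        (|u t| ^ p + |v t| ^ p) ^ (1 / p - 1)) t :=
    (((hasDerivAt_abs_rpow (u t) hp).comp t hu).add
      ((hasDerivAt_abs_rpow (v t) hp).comp t hv)).rpow_const (Or.inl (by
        simp only [Pi.add_apply, Function.comp_apply, hS]; positivity))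
  refine h.congr_deriv ?_
  have hNp : (N ^ p) ^ (1 / p - 1) = (N ^ (p - 1))⁻¹ := by
    rw [← rpow_mul hN.le, ← rpow_neg hN.le]
    congr 1
    field_simp
    ring
  rw [hS, hNp]
  simp only [div_rpow hu0 hN.le, div_rpow hv0 hN.le, mul_assoc,
    abs_rpow_sub_two_mul_self hp hu0, abs_rpow_sub_two_mul_self hp hv0]
  field_simp

theorem div_pNorm_rpow_sub_one_rpow_add {q : ℝ} (hpq : p.HolderConjugate q) {x y : ℝ}
    (hx : 0 ≤ x) (hy : 0 ≤ y) (hN : 0 < pNorm p (x, y)) :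
    ((x / pNorm p (x, y)) ^ (p - 1)) ^ q + ((y / pNorm p (x, y)) ^ (p - 1)) ^ q = 1 := by
  have h := pNorm_rpow hpq.ne_zero (x, y)
  rw [abs_of_nonneg hx, abs_of_nonneg hy] at h
  rw [← rpow_mul (div_nonneg hx hN.le), ← rpow_mul (div_nonneg hy hN.le), hpq.sub_one_mul_conj,
    div_rpow hx hN.le, div_rpow hy hN.le, ← add_div, ← h, div_self (by positivity)]

theorem snd_div_pNorm_rpow_sub_one_le (hp : 1 ≤ p) {c x y : ℝ} (hc : 0 < c) (hcx : c ≤ x)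
    (hy : 0 ≤ y) (hy₁ : y ≤ 1) : (y / pNorm p (x, y)) ^ (p - 1) ≤ c ^ (1 - p) := by
  have hN : c ≤ pNorm p (x, y) :=
    hcx.trans ((le_abs_self x).trans (abs_fst_le_pNorm (by linarith) (x, y)))
  calc (y / pNorm p (x, y)) ^ (p - 1) ≤ (1 / c) ^ (p - 1) :=
        rpow_le_rpow (div_nonneg hy (by linarith)) (div_le_div₀ zero_le_one hy₁ hc hN)
          (by linarith)
    _ = c ^ (1 - p) := by rw [one_div, inv_rpow hc.le, ← rpow_neg hc.le, neg_sub]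

end pNorm

section UnitSphere

variable {q : ℝ}

theorem rpow_sub_rpow_le_mul_sub (hq : 1 ≤ q) {x y : ℝ} (hx : 0 ≤ x) (hxy : x ≤ y)
    (hy : y ≤ 1) : y ^ q - x ^ q ≤ q * (y - x) := by
  refine (convex_Icc (0 : ℝ) 1).image_sub_le_mul_sub_of_deriv_le
    (differentiable_rpow_const hq).continuous.continuousOn
    (differentiable_rpow_const hq).differentiableOn (fun t ht => ?_) x ⟨hx, hxy.trans hy⟩ y
    ⟨hx.trans hxy, hy⟩ hxy
  rw [interior_Icc] at ht
  rw [Real.deriv_rpow_const]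
  exact mul_le_of_le_one_right (by linarith) (rpow_le_one ht.1.le ht.2.le (by linarith))

theorem two_rpow_neg_inv_rpow (hq : q ≠ 0) : ((2 : ℝ) ^ (-q⁻¹)) ^ q = 1 / 2 := by
  rw [← rpow_mul zero_le_two, neg_mul, inv_mul_cancel₀ hq, rpow_neg_one, one_div]

theorem two_rpow_neg_inv_le_one (hq : 0 ≤ q) : (2 : ℝ) ^ (-q⁻¹) ≤ 1 :=
  rpow_le_one_of_one_le_of_nonpos one_le_two (neg_nonpos.2 (inv_nonneg.2 hq))

theorem one_sub_two_rpow_neg_inv_rpow_lt_half (hq : 1 < q) :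
    (1 - (2 : ℝ) ^ (-q⁻¹)) ^ q < 1 / 2 := by
  have hq0 : 0 < q := by linarith
  have hw : 1 / 2 < (2 : ℝ) ^ (-q⁻¹) := by
    rw [one_div, ← rpow_neg_one]
    exact rpow_lt_rpow_of_exponent_lt one_lt_two (neg_lt_neg (inv_lt_one_of_one_lt₀ hq))
  rw [← two_rpow_neg_inv_rpow hq0.ne']
  exact rpow_lt_rpow (by linarith [two_rpow_neg_inv_le_one hq0.le]) (by linarith) hq0

/-- `2^{-1/q}` is the common coordinate of the diagonal point of the `ℓ^q` unit sphere; `hgap`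
forces `σ₂ > 1 - 2^{-1/q}`, while `τ₁ ≤ σ₁` gives `σ₁ ≥ 2^{-1/q}`. -/
theorem one_lt_add_of_rpow_add_eq_one (hq : 1 < q) {σ₁ τ₁ σ₂ τ₂ : ℝ} (hσ₁ : 0 ≤ σ₁)
    (hσ₂ : 0 ≤ σ₂) (hτ₁ : 0 ≤ τ₁) (h₁ : σ₁ ^ q + τ₁ ^ q = 1) (h₂ : σ₂ ^ q + τ₂ ^ q = 1)
    (hτσ : τ₁ ≤ σ₁) (hτ : τ₁ ≤ τ₂)
    (hgap : (1 - (2 : ℝ) ^ (-q⁻¹)) ^ q < 1 / 2 - q * (τ₂ - τ₁)) :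
    1 < σ₁ + σ₂ := by
  have hq0 : 0 < q := by linarith
  set w : ℝ := (2 : ℝ) ^ (-q⁻¹)
  have hw : w ^ q = 1 / 2 := two_rpow_neg_inv_rpow hq0.ne'
  have hw₁ : w ≤ 1 := two_rpow_neg_inv_le_one hq0.le
  have hτ₂ : τ₂ ≤ 1 := by
    by_contra! h
    linarith [one_lt_rpow h hq0, rpow_nonneg hσ₂ q]
  have hσ₁w : w ≤ σ₁ := by
    have : τ₁ ^ q ≤ σ₁ ^ q := rpow_le_rpow hτ₁ hτσ hq0.le
    exact (rpow_le_rpow_iff (by positivity) hσ₁ hq0).1 (by linarith)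
  have hσ₂w : 1 - w < σ₂ := by
    have hlip := rpow_sub_rpow_le_mul_sub hq.le hτ₁ hτ hτ₂
    have : w ^ q ≤ σ₁ ^ q := rpow_le_rpow (by positivity) hσ₁w hq0.le
    exact (rpow_lt_rpow_iff (by linarith) hσ₂ hq0).1 (by linarith)
  linarith

end UnitSphere

section Minimizer

variable {p z : ℝ}

theorem continuous_G (hp : 0 ≤ p) (z : ℝ) : Continuous (G p z) := by
  unfold G
  fun_prop (disch := first | positivity | exact fun _ => Or.inr (by positivity))

theorem exists_forall_G_le (hp : 0 < p) (z : ℝ) : ∃ m, ∀ f, G p z m ≤ G p z f := by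
  refine (continuous_G hp.le z).exists_forall_le
    (tendsto_atTop_mono (fun f => ?_) tendsto_norm_cocompact_atTop)
  rw [G_eq_pNorm, Prod.norm_def, Real.norm_eq_abs, Real.norm_eq_abs]
  linarith [pNorm_nonneg p (z - f.1, f.2), pNorm_nonneg p (f.1, 1 - f.2),
    max_le (abs_fst_le_pNorm hp f) (abs_snd_le_pNorm hp f)]

theorem eq_of_forall_G_le (hp : 1 < p) (hz : z ≠ 0) {x y : ℝ × ℝ}
    (hx : ∀ f, G p z x ≤ G p z f) (hy : ∀ f, G p z y ≤ G p z f) : x = y := by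
  have hp0 : 0 < p := by linarith
  have half : ∀ u v : ℝ × ℝ, pNorm p ((1 / 2 : ℝ) • (u + v)) = pNorm p (u + v) / 2 := by
    intro u v
    rw [pNorm_smul hp0.ne', abs_of_pos one_half_pos, one_div_mul_eq_div]
  have hm := hx ((1 / 2 : ℝ) • (x + y))
  have hxy := hy x
  have e₁ : (z - ((1 / 2 : ℝ) • (x + y)).1, ((1 / 2 : ℝ) • (x + y)).2) =
      (1 / 2 : ℝ) • ((z - x.1, x.2) + (z - y.1, y.2)) := by
    ext <;> simp <;> ring
  have e₂ : (((1 / 2 : ℝ) • (x + y)).1, 1 - ((1 / 2 : ℝ) • (x + y)).2) =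
      (1 / 2 : ℝ) • ((x.1, 1 - x.2) + (y.1, 1 - y.2)) := by
    ext <;> simp <;> ring
  rw [G_eq_pNorm, G_eq_pNorm, e₁, e₂, half, half, half] at hm
  rw [G_eq_pNorm, G_eq_pNorm] at hxy
  have t₁ := pNorm_add_le hp.le (z - x.1, x.2) (z - y.1, y.2)
  have t₂ := pNorm_add_le hp.le (x.1, 1 - x.2) (y.1, 1 - y.2)
  have t₃ := pNorm_add_le hp.le x y
  have c₁ := fst_mul_snd_eq_of_pNorm_add_eq hp (u := (z - x.1, x.2)) (v := (z - y.1, y.2))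
    (by linarith)
  have c₂ := fst_mul_snd_eq_of_pNorm_add_eq hp (u := (x.1, 1 - x.2)) (v := (y.1, 1 - y.2))
    (by linarith)
  have c₃ := fst_mul_snd_eq_of_pNorm_add_eq hp (u := x) (v := y) (by linarith)
  dsimp only at c₁ c₂
  refine Prod.ext (by linear_combination c₂ + c₃) (mul_left_cancel₀ hz ?_)
  linear_combination -c₁ - c₃

theorem snd_mem_Icc_of_forall_G_le (hp : 1 < p) (hz : z ≠ 0) {m : ℝ × ℝ}
    (hm : ∀ f, G p z m ≤ G p z f) : m.2 ∈ Icc (0 : ℝ) 1 := by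
  have hp0 : 0 ≤ p := by linarith
  set c := projIcc (0 : ℝ) 1 zero_le_one m.2
  have h₀ : |(c : ℝ)| ≤ |m.2| := by
    simpa using abs_projIcc_sub_projIcc zero_le_one (c := m.2) (d := 0)
  have h₁ : |1 - (c : ℝ)| ≤ |1 - m.2| := by
    simpa [abs_sub_comm] using abs_projIcc_sub_projIcc zero_le_one (c := m.2) (d := 1)
  have hc : G p z (m.1, c) ≤ G p z m :=
    add_le_add (add_le_add (pNorm_le_pNorm_of_abs_le hp0 h₀) (pNorm_le_pNorm_of_abs_le hp0 h₁))
      (pNorm_le_pNorm_of_abs_le hp0 h₀)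
  rw [← congrArg Prod.snd (eq_of_forall_G_le hp hz (fun f => hc.trans (hm f)) hm)]
  exact c.2

theorem fst_le_of_forall_G_le (hp : 1 ≤ p) (hz : 0 ≤ z) {m : ℝ × ℝ}
    (hm : ∀ f, G p z m ≤ G p z f) : m.1 ≤ 3 / 2 := by
  have hp0 : p ≠ 0 := by positivity
  have hz' : pNorm p (z, 1 / 2) ≤ z + 1 / 2 := by
    have h := pNorm_add_le hp (z, 0) (0, 1 / 2)
    rwa [Prod.mk_add_mk, add_zero, zero_add, pNorm_mk_zero hp0, pNorm_zero_mk hp0,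
      abs_of_nonneg hz, abs_of_pos one_half_pos] at h
  have hG : G p z (0, 1 / 2) ≤ z + 3 / 2 := by
    rw [G_eq_pNorm]
    norm_num [pNorm_zero_mk hp0]
    linarith
  have h₁ := abs_fst_le_pNorm (by positivity) (z - m.1, m.2)
  have h₂ := abs_fst_le_pNorm (by positivity) (m.1, 1 - m.2)
  have h₃ := abs_fst_le_pNorm (by positivity) m
  rw [G_eq_pNorm] at hm
  linarith [hm (0, 1 / 2), le_abs_self (z - m.1), le_abs_self m.1]

theorem ne_zero_of_forall_G_le (hp : 1 < p) (hz : 0 < z) {m : ℝ × ℝ}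
    (hm : ∀ f, G p z m ≤ G p z f) : m ≠ 0 := by
  rintro rfl
  have hp0 : p ≠ 0 := by positivity
  -- `k t = G p z (t, t)` for `t ≥ 0`; unlike `G`, `k` is differentiable at `0`.
  set k : ℝ → ℝ := fun t => pNorm p (z - t, t) + pNorm p (t, 1 - t) + 2 ^ (1 / p) * t
  have hk : HasDerivAt k (2 ^ (1 / p) - 2) 0 := by
    have h₁ := hasDerivAt_pNorm hp ((hasDerivAt_id' 0).const_sub z) (hasDerivAt_id' 0)
      (by simpa using hz.le) le_rfl (by simp [pNorm_mk_zero hp0, hz.ne'])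
    have h₂ := hasDerivAt_pNorm hp (hasDerivAt_id' 0) ((hasDerivAt_id' 0).const_sub 1)
      le_rfl (by norm_num) (by simp [pNorm_zero_mk hp0])
    refine ((h₁.add h₂).add ((hasDerivAt_id' 0).const_mul (2 ^ (1 / p)))).congr_deriv ?_
    simp [pNorm_mk_zero hp0, pNorm_zero_mk hp0, abs_of_pos hz, hz.ne',
      zero_rpow (by linarith : p - 1 ≠ 0)]
    ring
  have hmin : IsLocalMinOn k (Ici 0) 0 := by
    refine Filter.eventually_of_mem self_mem_nhdsWithin fun t (ht : 0 ≤ t) => ?_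
    have h := hm (t, t)
    rw [G_eq_pNorm, G_eq_pNorm, pNorm_diag hp0, abs_of_nonneg ht] at h
    simpa [k, Prod.zero_eq_mk, pNorm_mk_zero hp0, pNorm_zero_mk hp0, abs_of_pos hz] using h
  have h := hmin.hasFDerivWithinAt_nonneg hk.hasDerivWithinAt.hasFDerivWithinAt
    (y := 1) (mem_posTangentConeAt_of_segment_subset (by simp [Icc_subset_Ici_self]))
  rw [ContinuousLinearMap.toSpanSingleton_apply, one_smul] at h
  have h₂ : (2 : ℝ) ^ (1 / p) < 2 :=
    rpow_lt_self_of_one_lt one_lt_two (by rw [div_lt_one (by linarith)]; exact hp)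
  linarith

theorem fst_optimality (hp : 1 < p) {a b : ℝ} (hm : ∀ f, G p z (a, b) ≤ G p z f) (ha : 0 < a)
    (haz : a < z) (hb : 0 ≤ b) (hb₁ : b ≤ 1) :
    (a / pNorm p (a, b)) ^ (p - 1) + (a / pNorm p (a, 1 - b)) ^ (p - 1) =
      ((z - a) / pNorm p (z - a, b)) ^ (p - 1) := by
  have hp0 : 0 < p := by linarith
  have h₁ := hasDerivAt_pNorm hp ((hasDerivAt_id' a).const_sub z) (hasDerivAt_const a b)
    (sub_pos.2 haz).le hb (pNorm_pos_of_fst_pos hp0 (sub_pos.2 haz) b)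
  have h₂ := hasDerivAt_pNorm hp (hasDerivAt_id' a) (hasDerivAt_const a (1 - b))
    ha.le (by linarith) (pNorm_pos_of_fst_pos hp0 ha _)
  have h₃ := hasDerivAt_pNorm hp (hasDerivAt_id' a) (hasDerivAt_const a b)
    ha.le hb (pNorm_pos_of_fst_pos hp0 ha b)
  have hmin : IsLocalMin (fun x => G p z (x, b)) a :=
    Filter.Eventually.of_forall fun x => hm (x, b)
  have h := hmin.hasDerivAt_eq_zero ((h₁.add h₂).add h₃)
  simp only [mul_neg, mul_one, mul_zero, add_zero] at h
  linarith

theorem snd_optimality (hp : 1 < p) {a b : ℝ} (hm : ∀ f, G p z (a, b) ≤ G p z f) (ha : 0 < a)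
    (haz : a < z) (hb : 0 ≤ b) (hb₁ : b ≤ 1) :
    (b / pNorm p (a, b)) ^ (p - 1) + (b / pNorm p (z - a, b)) ^ (p - 1) =
      ((1 - b) / pNorm p (a, 1 - b)) ^ (p - 1) := by
  have hp0 : 0 < p := by linarith
  have h₁ := hasDerivAt_pNorm hp (hasDerivAt_const b (z - a)) (hasDerivAt_id' b)
    (sub_pos.2 haz).le hb (pNorm_pos_of_fst_pos hp0 (sub_pos.2 haz) b)
  have h₂ := hasDerivAt_pNorm hp (hasDerivAt_const b a) ((hasDerivAt_id' b).const_sub 1)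
    ha.le (by linarith) (pNorm_pos_of_fst_pos hp0 ha _)
  have h₃ := hasDerivAt_pNorm hp (hasDerivAt_const b a) (hasDerivAt_id' b)
    ha.le hb (pNorm_pos_of_fst_pos hp0 ha b)
  have hmin : IsLocalMin (fun y => G p z (a, y)) b :=
    Filter.Eventually.of_forall fun y => hm (a, y)
  have h := hmin.hasDerivAt_eq_zero ((h₁.add h₂).add h₃)
  simp only [mul_neg, mul_one, mul_zero, zero_add] at h
  linarith

theorem fst_lt_snd_of_forall_G_le {q : ℝ} (hpq : p.HolderConjugate q) (hz : 3 / 2 < z)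
    (hgap : (1 - (2 : ℝ) ^ (-q⁻¹)) ^ q < 1 / 2 - q * (z - 3 / 2) ^ (1 - p)) {m : ℝ × ℝ}
    (hm : ∀ f, G p z m ≤ G p z f) : m.1 < m.2 := by
  have hp : 1 < p := hpq.lt
  have hp0 : 0 < p := by linarith
  by_contra! hba
  obtain ⟨hb, hb₁⟩ := snd_mem_Icc_of_forall_G_le hp (by linarith) hm
  have ha₃ := fst_le_of_forall_G_le hp.le (by linarith) hm
  obtain ⟨a, b⟩ := m
  dsimp only at hba hb hb₁ ha₃
  have ha : 0 < a := by
    by_contra! ha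
    exact ne_zero_of_forall_G_le hp (by linarith) hm
      (Prod.mk_eq_zero.2 ⟨by linarith, by linarith⟩)
  have haz : a < z := by linarith
  have E₁ := fst_optimality hp hm ha haz hb hb₁
  have E₂ := snd_optimality hp hm ha haz hb hb₁
  set N₁ := pNorm p (z - a, b)
  set N₂ := pNorm p (a, 1 - b)
  set N₃ := pNorm p (a, b)
  have hN₁ : z - a ≤ N₁ := (le_abs_self _).trans (abs_fst_le_pNorm hp0 (z - a, b))
  have hN₂ : 0 ≤ N₂ := pNorm_nonneg p _
  have hN₃ : 0 ≤ N₃ := pNorm_nonneg p _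
  have hσ₃ : ((z - a) / N₁) ^ (p - 1) ≤ 1 :=
    rpow_le_one (div_nonneg (by linarith) (by linarith)) ((div_le_one (by linarith)).2 hN₁)
      (by linarith)
  have hτ₃ : (b / N₁) ^ (p - 1) ≤ (z - 3 / 2) ^ (1 - p) :=
    snd_div_pNorm_rpow_sub_one_le hp.le (by linarith) (by linarith) hb hb₁
  have hτσ : (b / N₃) ^ (p - 1) ≤ (a / N₃) ^ (p - 1) :=
    rpow_le_rpow (div_nonneg hb hN₃) (div_le_div_of_nonneg_right hba hN₃) (by linarith)
  have hτ₁ : 0 ≤ (b / N₃) ^ (p - 1) := rpow_nonneg (div_nonneg hb hN₃) _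
  have hτ₃' : 0 ≤ (b / N₁) ^ (p - 1) := rpow_nonneg (div_nonneg hb (by linarith)) _
  have key := one_lt_add_of_rpow_add_eq_one hpq.symm.lt
    (rpow_nonneg (div_nonneg ha.le hN₃) _) (rpow_nonneg (div_nonneg ha.le hN₂) _) hτ₁
    (div_pNorm_rpow_sub_one_rpow_add hpq ha.le hb (pNorm_pos_of_fst_pos hp0 ha b))
    (div_pNorm_rpow_sub_one_rpow_add hpq ha.le (by linarith) (pNorm_pos_of_fst_pos hp0 ha _))
    hτσ (by linarith) (by nlinarith [hpq.symm.pos])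
  linarith

end Minimizer

/-- For every `p ∈ (1,∞)` there exists `z > 1` such that the unique global minimizer
`(f̂₁, f̂₂)` of `G_z` over `ℝ²` satisfies `f̂₁ < f̂₂` (violation of efficiency). -/
theorem stmt_0 (p : ℝ) (hp : 1 < p) :
    ∃ z : ℝ, 1 < z ∧ ∃ fhat : ℝ × ℝ,
      (∀ f : ℝ × ℝ, G p z fhat ≤ G p z f) ∧
      (∀ g : ℝ × ℝ, (∀ f : ℝ × ℝ, G p z g ≤ G p z f) → g = fhat) ∧
      fhat.1 < fhat.2 := by
  have hpq := Real.HolderConjugate.conjExponent hp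
  set q := p.conjExponent
  have hlim : Tendsto (fun z : ℝ => 1 / 2 - q * (z - 3 / 2) ^ (1 - p)) atTop (𝓝 (1 / 2)) := by
    have h₁ : Tendsto (fun z : ℝ => z - 3 / 2) atTop atTop := by
      simpa only [sub_eq_add_neg, id] using
        tendsto_atTop_add_const_right atTop (-(3 / 2)) tendsto_id
    have h₂ := ((tendsto_rpow_neg_atTop (sub_pos.2 hp)).comp h₁).const_mul q |>.const_sub (1 / 2)
    simpa only [Function.comp_def, neg_sub, mul_zero, sub_zero] using h₂
  obtain ⟨z, hgap, hz⟩ :=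
    ((hlim.eventually (lt_mem_nhds (one_sub_two_rpow_neg_inv_rpow_lt_half hpq.symm.lt))).and
      (eventually_gt_atTop (3 / 2))).exists
  obtain ⟨m, hm⟩ := exists_forall_G_le (by linarith : 0 < p) z
  exact ⟨z, by linarith, m, hm, fun g hg => eq_of_forall_G_le hp (by linarith) hg hm,
    fst_lt_snd_of_forall_G_le hpq hz hgap hm⟩
end

section
/- Fix p ∈ (1,∞) and z > 1. The function G_z : ℝ² → ℝ is strictly convex: for all f, g ∈ ℝ² with f ≠ g and all θ ∈ (0,1), G_z(θf + (1−θ)g) < θ G_z(f) + (1−θ) G_z(g). In particular G_z has at most one global minimizer. -/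
open Set ENNReal WithLp Function

theorem StrictConvexOn.comp_linearMap {𝕜 E F β : Type*} [Semiring 𝕜] [PartialOrder 𝕜]
    [AddCommMonoid E] [AddCommMonoid F] [Module 𝕜 E] [Module 𝕜 F] [AddCommMonoid β]
    [PartialOrder β] [SMul 𝕜 β] {f : F → β} {s : Set F} (hf : StrictConvexOn 𝕜 s f)
    {g : E →ₗ[𝕜] F} (hg : Injective g) : StrictConvexOn 𝕜 (g ⁻¹' s) (f ∘ g) :=
  ⟨hf.1.linear_preimage _, fun x hx y hy hxy a b ha hb hab => by
    simpa only [comp_apply, map_add, map_smul] using hf.2 hx hy (hg.ne hxy) ha hb hab⟩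

theorem Real.abs_add_div_two_rpow_lt {p : ℝ} (hp : 1 < p) {a b : ℝ} (hab : a ≠ b) :
    |(a + b) / 2| ^ p < (|a| ^ p + |b| ^ p) / 2 := by
  by_cases h : |a| = |b|
  · obtain rfl : a = -b := (abs_eq_abs.1 h).resolve_left hab
    have hb : b ≠ 0 := by rintro rfl; simp at hab
    have : 0 < |b| ^ p := Real.rpow_pos_of_pos (abs_pos.2 hb) p
    simp only [neg_add_cancel, zero_div, abs_zero, abs_neg, Real.zero_rpow (by linarith : p ≠ 0)]
    linarith
  · calc |(a + b) / 2| ^ p ≤ ((1 / 2 : ℝ) • |a| + (1 / 2 : ℝ) • |b|) ^ p := by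
          gcongr
          simp only [smul_eq_mul]
          rw [abs_div, abs_two]
          linarith [abs_add_le a b]
      _ < (1 / 2 : ℝ) • |a| ^ p + (1 / 2 : ℝ) • |b| ^ p :=
          (strictConvexOn_rpow hp).2 (abs_nonneg a) (abs_nonneg b) h (by norm_num) (by norm_num)
            (by norm_num)
      _ = (|a| ^ p + |b| ^ p) / 2 := by simp only [smul_eq_mul]; ring

theorem Real.abs_add_div_two_rpow_le {p : ℝ} (hp : 1 < p) (a b : ℝ) :
    |(a + b) / 2| ^ p ≤ (|a| ^ p + |b| ^ p) / 2 := by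
  rcases eq_or_ne a b with rfl | hab
  · simp
  · exact (Real.abs_add_div_two_rpow_lt hp hab).le

namespace WithLp

theorem prod_norm_rpow_eq_add {p : ℝ≥0∞} {α β : Type*} [SeminormedAddCommGroup α]
    [SeminormedAddCommGroup β] (hp : 0 < p.toReal) (x : WithLp p (α × β)) :
    ‖x‖ ^ p.toReal = ‖x.fst‖ ^ p.toReal + ‖x.snd‖ ^ p.toReal := by
  rw [prod_norm_eq_add hp, one_div, Real.rpow_inv_rpow (by positivity) hp.ne']

theorem strictConvexSpace_prod_real {p : ℝ≥0∞} [Fact (1 ≤ p)] (hp : 1 < p) (hp' : p ≠ ∞) :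
    StrictConvexSpace ℝ (WithLp p (ℝ × ℝ)) := by
  have hq : 1 < p.toReal := by
    simpa using (ENNReal.toReal_lt_toReal one_ne_top hp').2 hp
  refine StrictConvexSpace.of_norm_combo_lt_one fun x y hx hy hxy => ⟨1 / 2, 1 / 2, by norm_num, ?_⟩
  have hxy' : x.fst ≠ y.fst ∨ x.snd ≠ y.snd := by
    by_contra! h
    exact hxy (ofLp_injective _ (Prod.ext h.1 h.2))
  have hnorm (w : WithLp p (ℝ × ℝ)) :
      ‖w‖ ^ p.toReal = |w.fst| ^ p.toReal + |w.snd| ^ p.toReal := by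
    simp only [prod_norm_rpow_eq_add (by linarith) w, Real.norm_eq_abs]
  have hx1 : |x.fst| ^ p.toReal + |x.snd| ^ p.toReal = 1 := by rw [← hnorm, hx, Real.one_rpow]
  have hy1 : |y.fst| ^ p.toReal + |y.snd| ^ p.toReal = 1 := by rw [← hnorm, hy, Real.one_rpow]
  have hlt : ‖(1 / 2 : ℝ) • x + (1 / 2 : ℝ) • y‖ ^ p.toReal < 1 := by
    have hmid (a b : ℝ) : (1 / 2 : ℝ) * a + (1 / 2 : ℝ) * b = (a + b) / 2 := by ring
    rw [hnorm]
    simp only [add_fst, smul_fst, add_snd, smul_snd, smul_eq_mul, hmid]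
    rcases hxy' with h | h
    · linarith [Real.abs_add_div_two_rpow_lt hq h, Real.abs_add_div_two_rpow_le hq x.snd y.snd]
    · linarith [Real.abs_add_div_two_rpow_le hq x.fst y.fst, Real.abs_add_div_two_rpow_lt hq h]
  exact lt_of_not_ge fun h => (Real.one_le_rpow h (by linarith)).not_gt hlt

theorem not_collinear_toLp_prod {p : ℝ≥0∞} {z : ℝ} (hz : z ≠ 0) :
    ¬Collinear ℝ ({toLp p (z, 0), toLp p (0, 1), 0} : Set (WithLp p (ℝ × ℝ))) := by
  rw [collinear_iff_of_mem (p₀ := 0) (by simp)]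
  rintro ⟨v, hv⟩
  obtain ⟨r₁, h₁⟩ := hv (toLp p (z, 0)) (by simp)
  obtain ⟨r₂, h₂⟩ := hv (toLp p (0, 1)) (by simp)
  simp only [vadd_eq_add, add_zero] at h₁ h₂
  have hz₁ : z = r₁ * v.fst := by simpa using congrArg WithLp.fst h₁
  have h0₁ : 0 = r₁ * v.snd := by simpa using congrArg WithLp.snd h₁
  have h0₂ : 0 = r₂ * v.fst := by simpa using congrArg WithLp.fst h₂
  have h1₂ : 1 = r₂ * v.snd := by simpa using congrArg WithLp.snd h₂
  exact hz (by linear_combination z * h1₂ + r₂ * v.snd * hz₁ - r₂ * v.fst * h0₁)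

end WithLp

theorem mem_affineSpan_pair_of_sameRay_sub {V : Type*} [AddCommGroup V] [Module ℝ V] {x y c : V}
    (hxy : x ≠ y) (h : SameRay ℝ (x - c) (y - c)) : c ∈ line[ℝ, x, y] := by
  have hcol : Collinear ℝ ({c, x, y} : Set V) := by
    rcases wbtw_total_of_sameRay_vsub_left (x := c) h with h' | h'
    · exact h'.collinear
    · rw [Set.pair_comm]
      exact h'.collinear
  exact hcol.mem_affineSpan_of_mem_of_ne (by simp) (by simp) (by simp) hxy

section StrictConvexSpace

variable {E : Type*} [NormedAddCommGroup E] [NormedSpace ℝ E] [StrictConvexSpace ℝ E]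

theorem dist_combo_lt_of_not_sameRay {x y c : E} (h : ¬SameRay ℝ (x - c) (y - c)) {a b : ℝ}
    (ha : 0 < a) (hb : 0 < b) (hab : a + b = 1) :
    dist (a • x + b • y) c < a * dist x c + b * dist y c := by
  have hsplit : a • x + b • y - c = a • (x - c) + b • (y - c) := by
    have hc : c = a • c + b • c := by rw [← add_smul, hab, one_smul]
    calc a • x + b • y - c = a • x + b • y - (a • c + b • c) := by rw [← hc]
      _ = a • (x - c) + b • (y - c) := by simp only [smul_sub]; abel
  rw [dist_eq_norm, dist_eq_norm, dist_eq_norm, hsplit]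
  calc ‖a • (x - c) + b • (y - c)‖ < ‖a • (x - c)‖ + ‖b • (y - c)‖ :=
        norm_add_lt_of_not_sameRay fun h' => h <| by
          simpa [smul_smul, ha.ne', hb.ne'] using
            (h'.pos_smul_left (inv_pos.2 ha)).pos_smul_right (inv_pos.2 hb)
    _ = a * ‖x - c‖ + b * ‖y - c‖ := by rw [norm_smul_of_nonneg ha.le, norm_smul_of_nonneg hb.le]

theorem strictConvexOn_dist_add_dist_add_dist {c₁ c₂ c₃ : E}
    (h : ¬Collinear ℝ ({c₁, c₂, c₃} : Set E)) :
    StrictConvexOn ℝ univ fun x => dist x c₁ + dist x c₂ + dist x c₃ := by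
  refine ⟨convex_univ, fun x _ y _ hxy a b ha hb hab => ?_⟩
  have hle (c : E) : dist (a • x + b • y) c ≤ a * dist x c + b * dist y c :=
    (convexOn_dist c convex_univ).2 trivial trivial ha.le hb.le hab
  have hlt {c : E} (hc : ¬SameRay ℝ (x - c) (y - c)) :=
    dist_combo_lt_of_not_sameRay hc ha hb hab
  simp only [smul_eq_mul]
  by_cases h₁ : SameRay ℝ (x - c₁) (y - c₁)
  · by_cases h₂ : SameRay ℝ (x - c₂) (y - c₂)
    · have h₃ : ¬SameRay ℝ (x - c₃) (y - c₃) := fun h₃ =>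
        h (collinear_triple_of_mem_affineSpan_pair (mem_affineSpan_pair_of_sameRay_sub hxy h₁)
          (mem_affineSpan_pair_of_sameRay_sub hxy h₂) (mem_affineSpan_pair_of_sameRay_sub hxy h₃))
      linarith [hle c₁, hle c₂, hlt h₃]
    · linarith [hle c₁, hlt h₂, hle c₃]
  · linarith [hlt h₁, hle c₂, hle c₃]

end StrictConvexSpace

theorem G_eq_dist_add_dist_add_dist {p : ℝ} (hp : 0 < p) (z : ℝ) (f : ℝ × ℝ) :
    G p z f = dist (toLp (.ofReal p) f) (toLp (.ofReal p) (z, 0)) +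
      dist (toLp (.ofReal p) f) (toLp (.ofReal p) (0, 1)) + dist (toLp (.ofReal p) f) 0 := by
  have hq : 0 < (ENNReal.ofReal p).toReal := by rw [ENNReal.toReal_ofReal hp.le]; exact hp
  simp [G, prod_dist_eq_add hq, ENNReal.toReal_ofReal hp.le, Real.dist_eq, abs_sub_comm f.1 z,
    abs_sub_comm f.2 1]

theorem strictConvexOn_G {p z : ℝ} (hp : 1 < p) (hz : z ≠ 0) : StrictConvexOn ℝ univ (G p z) := by
  have : Fact (1 ≤ ENNReal.ofReal p) := ⟨by simpa using hp.le⟩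
  have : StrictConvexSpace ℝ (WithLp (.ofReal p) (ℝ × ℝ)) :=
    strictConvexSpace_prod_real (by simpa using hp) ofReal_ne_top
  have hc := not_collinear_toLp_prod (p := .ofReal p) hz
  have h := (strictConvexOn_dist_add_dist_add_dist hc).comp_linearMap
    (g := (WithLp.linearEquiv (.ofReal p) ℝ (ℝ × ℝ)).symm.toLinearMap) (LinearEquiv.injective _)
  rw [preimage_univ] at h
  rwa [show G p z = _ from funext fun f => G_eq_dist_add_dist_add_dist (by linarith) z f]

/-- For `p ∈ (1,∞)` and `z > 1`, the function `G_z` is strictly convex; in particular it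
has at most one global minimizer. -/
theorem stmt_1 (p : ℝ) (hp : 1 < p) (z : ℝ) (hz : 1 < z) :
    (∀ f g : ℝ × ℝ, f ≠ g → ∀ θ : ℝ, 0 < θ → θ < 1 →
      G p z (θ • f + (1 - θ) • g) < θ * G p z f + (1 - θ) * G p z g) ∧
    (∀ f g : ℝ × ℝ, (∀ h : ℝ × ℝ, G p z f ≤ G p z h) →
      (∀ h : ℝ × ℝ, G p z g ≤ G p z h) → f = g) := by
  have hG := strictConvexOn_G hp (by linarith : z ≠ 0)
  refine ⟨fun f g hfg θ hθ hθ1 => ?_, fun f g hf hg => ?_⟩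
  · simpa using hG.2 trivial trivial hfg hθ (sub_pos.2 hθ1) (add_sub_cancel θ 1)
  · exact hG.eq_of_isMinOn (isMinOn_iff.2 fun h _ => hf h) (isMinOn_iff.2 fun h _ => hg h)
      trivial trivial
end

section
/- Fix p ∈ (1,∞) and z > 1. Any global minimizer (f̂₁, f̂₂) of G_z over ℝ² satisfies f̂₁ ∈ [0,1] and f̂₂ ∈ [0,1]. (In particular, even though one reviewer gives paper 1 the score z > 1, its aggregate score is at most 1.) -/
open Real

noncomputable def pNorm2 (p u v : ℝ) : ℝ := (|u| ^ p + |v| ^ p) ^ (1 / p)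

lemma G_eq_pNorm2 (p z : ℝ) (f : ℝ × ℝ) :
    G p z f = pNorm2 p (z - f.1) f.2 + pNorm2 p f.1 (1 - f.2) + pNorm2 p f.1 f.2 := rfl

section pNorm2

variable {p : ℝ}

lemma pNorm2_comm (u v : ℝ) : pNorm2 p u v = pNorm2 p v u := by
  rw [pNorm2, pNorm2, add_comm]

lemma pNorm2_lt_pNorm2_left (hp : 0 < p) {u u' : ℝ} (v : ℝ) (hu : |u'| < |u|) :
    pNorm2 p u' v < pNorm2 p u v := by
  have := rpow_lt_rpow (abs_nonneg u') hu hp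
  exact rpow_lt_rpow (by positivity) (by linarith) (by positivity)

lemma pNorm2_lt_pNorm2_right (hp : 0 < p) (u : ℝ) {v v' : ℝ} (hv : |v'| < |v|) :
    pNorm2 p u v' < pNorm2 p u v := by
  simpa only [pNorm2_comm u] using pNorm2_lt_pNorm2_left hp u hv

lemma pNorm2_le_pNorm2_add_abs_sub (hp : 1 ≤ p) (x y v : ℝ) :
    pNorm2 p x v ≤ pNorm2 p y v + |x - y| := by
  have hp0 : p ≠ 0 := by positivity
  have := Lp_add_le Finset.univ ![x - y, 0] ![y, v] hp
  simp only [Fin.sum_univ_two, Matrix.cons_val_zero, Matrix.cons_val_one,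
    sub_add_cancel, zero_add, abs_zero, zero_rpow hp0, add_zero] at this
  rwa [← rpow_mul (abs_nonneg _), mul_one_div_cancel hp0, rpow_one, add_comm (|x - y|)] at this

/-- `(1 + |t| ^ p) ^ (-1 / q)` is the slope at `a = 1` of the convex function `a ↦ pNorm2 p a t`,
so this is its tangent line inequality. -/
lemma pNorm2_one_add_div_le {q : ℝ} (hpq : p.HolderConjugate q) (a t : ℝ) :
    pNorm2 p 1 t + (a - 1) / (1 + |t| ^ p) ^ (1 / q) ≤ pNorm2 p a t := by
  have hmul : |t| * |t| ^ (p - 1) = |t| ^ p := by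
    rw [← rpow_one_add' (abs_nonneg t) (by linarith [hpq.lt]), add_sub_cancel]
  have hholder : a + |t| ^ p ≤ pNorm2 p a t * (1 + |t| ^ p) ^ (1 / q) := by
    have := inner_le_Lp_mul_Lq Finset.univ ![a, |t|] ![1, |t| ^ (p - 1)] hpq
    simpa only [Fin.sum_univ_two, Matrix.cons_val_zero, Matrix.cons_val_one, mul_one, abs_one,
      one_rpow, abs_abs, abs_of_nonneg (rpow_nonneg (abs_nonneg t) _),
      ← rpow_mul (abs_nonneg t), hpq.sub_one_mul_conj, hmul, pNorm2] using this
  have hsplit : pNorm2 p 1 t * (1 + |t| ^ p) ^ (1 / q) = 1 + |t| ^ p := by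
    rw [pNorm2, abs_one, one_rpow, ← rpow_add (by positivity), one_div, one_div,
      hpq.inv_add_inv_eq_one, rpow_one]
  rw [← le_sub_iff_add_le', div_le_iff₀ (by positivity), sub_mul, hsplit]
  linarith

lemma pNorm2_one_add_half_lt (hp : 1 < p) {a t : ℝ} (ha : 1 < a) (ht : |t| ≤ 1) :
    pNorm2 p 1 t + (a - 1) / 2 < pNorm2 p a t := by
  have hpq := HolderConjugate.conjExponent hp
  set q := p.conjExponent
  have hSq : (1 + |t| ^ p) ^ (1 / q) < 2 :=
    calc (1 + |t| ^ p) ^ (1 / q) ≤ 2 ^ (1 / q) :=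
          rpow_le_rpow (by positivity)
            (by linarith [rpow_le_one (abs_nonneg t) ht (by linarith : 0 ≤ p)])
            (one_div_nonneg.mpr hpq.symm.nonneg)
      _ < 2 ^ (1 : ℝ) := rpow_lt_rpow_of_exponent_lt one_lt_two
          ((div_lt_one hpq.symm.pos).mpr hpq.symm.lt)
      _ = 2 := rpow_one 2
  have := pNorm2_one_add_div_le hpq a t
  have : (a - 1) / 2 < (a - 1) / (1 + |t| ^ p) ^ (1 / q) :=
    div_lt_div_of_pos_left (by linarith) (by positivity) hSq
  linarith

end pNorm2

section G

variable {p : ℝ} (z : ℝ)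

lemma G_lt_of_snd_neg (hp : 0 < p) (a : ℝ) {b : ℝ} (hb : b < 0) :
    G p z (a, 0) < G p z (a, b) := by
  have hb' : |(0 : ℝ)| < |b| := by simpa using hb.ne
  have h1b : |1 - (0 : ℝ)| < |1 - b| := by
    rw [sub_zero, abs_one, abs_of_pos (by linarith)]; linarith
  simp only [G_eq_pNorm2]
  gcongr ?_ + ?_ + ?_ <;> apply pNorm2_lt_pNorm2_right hp <;> assumption

lemma G_lt_of_one_lt_snd (hp : 0 < p) (a : ℝ) {b : ℝ} (hb : 1 < b) :
    G p z (a, 1) < G p z (a, b) := by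
  have hb' : |(1 : ℝ)| < |b| := by rw [abs_one, abs_of_pos (by linarith)]; exact hb
  have h1b : |1 - (1 : ℝ)| < |1 - b| := by
    rw [sub_self, abs_zero, abs_pos]; linarith
  simp only [G_eq_pNorm2]
  gcongr ?_ + ?_ + ?_ <;> apply pNorm2_lt_pNorm2_right hp <;> assumption

lemma G_lt_of_fst_neg (hp : 0 < p) (hz : 0 ≤ z) {a : ℝ} (ha : a < 0) (b : ℝ) :
    G p z (0, b) < G p z (a, b) := by
  have ha' : |(0 : ℝ)| < |a| := by simpa using ha.ne
  have hza : |z - 0| < |z - a| := by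
    rw [sub_zero, abs_of_nonneg hz, abs_of_pos (by linarith)]; linarith
  simp only [G_eq_pNorm2]
  gcongr ?_ + ?_ + ?_ <;> apply pNorm2_lt_pNorm2_left hp <;> assumption

lemma G_lt_of_one_lt_fst (hp : 1 < p) {a : ℝ} (ha : 1 < a) {b : ℝ}
    (hb : b ∈ Set.Icc (0 : ℝ) 1) :
    G p z (1, b) < G p z (a, b) := by
  have hb1 : |b| ≤ 1 := abs_le.mpr ⟨by linarith [hb.1], hb.2⟩
  have h1b : |1 - b| ≤ 1 := abs_le.mpr ⟨by linarith [hb.2], by linarith [hb.1]⟩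
  have hfirst := pNorm2_le_pNorm2_add_abs_sub hp.le (z - 1) (z - a) b
  rw [show z - 1 - (z - a) = a - 1 by ring, abs_of_pos (by linarith)] at hfirst
  have hsecond := pNorm2_one_add_half_lt hp ha h1b
  have hthird := pNorm2_one_add_half_lt hp ha hb1
  simp only [G_eq_pNorm2]
  linarith

end G

/-- For `p ∈ (1,∞)` and `z > 1`, any global minimizer `(f̂₁, f̂₂)` of `G_z` over `ℝ²`
satisfies `f̂₁ ∈ [0,1]` and `f̂₂ ∈ [0,1]`. -/
theorem stmt_2 (p : ℝ) (hp : 1 < p) (z : ℝ) (hz : 1 < z) (fhat : ℝ × ℝ)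
    (hmin : ∀ f : ℝ × ℝ, G p z fhat ≤ G p z f) :
    fhat.1 ∈ Set.Icc (0 : ℝ) 1 ∧ fhat.2 ∈ Set.Icc (0 : ℝ) 1 := by
  obtain ⟨a, b⟩ := fhat
  have hp0 : 0 < p := by linarith
  have hb : b ∈ Set.Icc (0 : ℝ) 1 :=
    ⟨le_of_not_gt fun hb ↦ (hmin _).not_gt (G_lt_of_snd_neg z hp0 a hb),
      le_of_not_gt fun hb ↦ (hmin _).not_gt (G_lt_of_one_lt_snd z hp0 a hb)⟩
  refine ⟨⟨le_of_not_gt fun ha ↦ ?_, le_of_not_gt fun ha ↦ ?_⟩, hb⟩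
  · exact (hmin _).not_gt (G_lt_of_fst_neg z hp0 (by linarith) ha b)
  · exact (hmin _).not_gt (G_lt_of_one_lt_fst z hp ha hb)
end

section
/- Fix p ∈ (1,∞). The function H* attains its minimum over [0,1]² at the point v̂ = (v̂₁, v̂₂) where v̂₁ = (1/2) · (1/(2^{p/(p−1)} − 1))^{1/p} and v̂₂ = 1/2; that is, H*(v̂) ≤ H*(f) for all f ∈ [0,1]². -/
/-! With `q` the conjugate exponent of `p` and `b = (2^q - 1)^{1/q} / 2`, the vector `(1/2, b)` has
unit `ℓ^q` norm. Hölder's inequality against it bounds the two `ℓ^p` norms in `H*` from below by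
`f₁/2 + b (1 - f₂)` and `f₁/2 + b f₂`, so `H* ≥ b - 1` on the square. At `v̂` both Hölder
inequalities are equalities, and a direct computation gives `H*(v̂) = b - 1`. -/

/-- The limiting objective `H*` on `[0,1]²`. -/
noncomputable def Hstar (p : ℝ) (f : ℝ × ℝ) : ℝ :=
  -f.1 + (f.1 ^ p + (1 - f.2) ^ p) ^ (1 / p) + (f.1 ^ p + f.2 ^ p) ^ (1 / p) - 1

open Real Set

lemma mul_add_mul_le_rpow_add_rpow_one_div {p q a b x y : ℝ} (hpq : p.HolderConjugate q)
    (ha : 0 ≤ a) (hb : 0 ≤ b) (hx : 0 ≤ x) (hy : 0 ≤ y) (hab : a ^ q + b ^ q = 1) :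
    a * x + b * y ≤ (x ^ p + y ^ p) ^ (1 / p) := by
  have h := inner_le_Lp_mul_Lq_of_nonneg Finset.univ hpq (f := ![x, y]) (g := ![a, b])
    (by simp [Fin.forall_fin_two, hx, hy]) (by simp [Fin.forall_fin_two, ha, hb])
  simpa [Fin.sum_univ_two, hab, mul_comm] using h

lemma sub_one_le_Hstar {p q b : ℝ} (hpq : p.HolderConjugate q) (hb : 0 ≤ b)
    (hbq : (1 / 2 : ℝ) ^ q + b ^ q = 1) {f : ℝ × ℝ} (hf₁ : 0 ≤ f.1) (hf₂ : f.2 ∈ Icc 0 1) :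
    b - 1 ≤ Hstar p f := by
  have h₁ := mul_add_mul_le_rpow_add_rpow_one_div hpq (by norm_num) hb hf₁ (sub_nonneg.2 hf₂.2) hbq
  have h₂ := mul_add_mul_le_rpow_add_rpow_one_div hpq (by norm_num) hb hf₁ hf₂.1 hbq
  unfold Hstar
  linarith

lemma half_rpow_add_rpow_eq_one {q : ℝ} (hq : 0 < q) :
    (1 / 2 : ℝ) ^ q + ((2 ^ q - 1) ^ (1 / q) / 2) ^ q = 1 := by
  have h2q : 1 < (2 : ℝ) ^ q := one_lt_rpow (by norm_num) hq
  rw [div_rpow (x := _ ^ (1 / q)) (by positivity) (by norm_num), one_div q,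
    rpow_inv_rpow (by linarith) hq.ne', div_rpow (by norm_num) (by norm_num), one_rpow]
  field_simp
  ring

lemma half_mul_one_div_rpow_mem_Icc {p q : ℝ} (hp : 0 ≤ p) (hq : 1 ≤ q) :
    1 / 2 * (1 / ((2 : ℝ) ^ q - 1)) ^ (1 / p) ∈ Icc 0 1 := by
  have h2q : 2 ≤ (2 : ℝ) ^ q := by simpa using rpow_le_rpow_of_exponent_le one_le_two hq
  have h0 : 0 ≤ 1 / ((2 : ℝ) ^ q - 1) := one_div_nonneg.2 (by linarith)
  have hle : (1 / ((2 : ℝ) ^ q - 1)) ^ (1 / p) ≤ 1 :=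
    rpow_le_one h0 ((div_le_one (by linarith)).2 (by linarith)) (by positivity)
  exact ⟨mul_nonneg (by norm_num) (rpow_nonneg h0 _), by linarith⟩

lemma Hstar_vhat_eq {p q : ℝ} (hpq : p.HolderConjugate q) :
    Hstar p (1 / 2 * (1 / ((2 : ℝ) ^ q - 1)) ^ (1 / p), 1 / 2) =
      (2 ^ q - 1) ^ (1 / q) / 2 - 1 := by
  have hp := hpq.pos
  have hr₂ : (2 : ℝ) ^ q = 2 * 2 ^ (q - 1) := by rw [rpow_sub_one two_ne_zero]; ring
  have hrp : ((2 : ℝ) ^ (q - 1)) ^ p = 2 ^ q := by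
    rw [← rpow_mul zero_le_two, hpq.symm.sub_one_mul_conj]
  have hA : 0 < (2 : ℝ) ^ q - 1 := by linarith [one_lt_rpow one_lt_two hpq.symm.pos]
  -- `r = 2^(q-1)` has `r^p = 2r`, which makes `v̂₁^p + (1/2)^p = (r v̂₁)^p` a perfect `p`-th power.
  set r : ℝ := 2 ^ (q - 1)
  rw [hr₂] at hrp hA ⊢
  set t := (1 / (2 * r - 1)) ^ (1 / p) with ht_def
  have ht : 0 ≤ t := by positivity
  have htp : t ^ p = 1 / (2 * r - 1) := by
    rw [ht_def, one_div p, rpow_inv_rpow (by positivity) hp.ne']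
  have hsum : (1 / 2 * t) ^ p + (1 / 2) ^ p = (1 / 2 * (r * t)) ^ p := by
    rw [mul_rpow (by norm_num) ht, mul_rpow (by norm_num) (by positivity),
      mul_rpow (by positivity) ht, htp, hrp]
    field_simp
    ring
  have hroot : ((1 / 2 * (r * t)) ^ p) ^ (1 / p) = 1 / 2 * (r * t) := by
    rw [one_div p, rpow_rpow_inv (by positivity) hp.ne']
  have hAt : (2 * r - 1) * t = (2 * r - 1) ^ (1 / q) := by
    rw [ht_def, div_rpow zero_le_one hA.le, one_rpow, mul_one_div, one_div q, ← hpq.one_sub_inv,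
      rpow_sub hA, rpow_one, one_div]
  unfold Hstar
  rw [show (1 : ℝ) - 1 / 2 = 1 / 2 by norm_num, hsum, hroot, ← hAt]
  ring

/-- For `p ∈ (1,∞)`, `H*` attains its minimum over `[0,1]²` at
`v̂ = ((1/2)·(1/(2^{p/(p−1)} − 1))^{1/p}, 1/2)`. -/
theorem stmt_7 (p : ℝ) (hp : 1 < p) :
    ((1 / 2 * (1 / ((2 : ℝ) ^ (p / (p - 1)) - 1)) ^ (1 / p), (1 : ℝ) / 2) ∈
      Set.Icc (0 : ℝ) 1 ×ˢ Set.Icc (0 : ℝ) 1) ∧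
    ∀ f ∈ Set.Icc (0 : ℝ) 1 ×ˢ Set.Icc (0 : ℝ) 1,
      Hstar p (1 / 2 * (1 / ((2 : ℝ) ^ (p / (p - 1)) - 1)) ^ (1 / p), (1 : ℝ) / 2) ≤
        Hstar p f := by
  have hpq : p.HolderConjugate (p / (p - 1)) := .conjExponent hp
  have hq : 1 < p / (p - 1) := hpq.symm.lt
  have hb : 0 ≤ ((2 : ℝ) ^ (p / (p - 1)) - 1) ^ (1 / (p / (p - 1))) / 2 :=
    div_nonneg (rpow_nonneg (sub_nonneg.2 (one_le_rpow one_le_two (by linarith))) _) zero_le_two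
  refine ⟨⟨half_mul_one_div_rpow_mem_Icc hpq.nonneg hq.le, by norm_num⟩, fun f hf => ?_⟩
  rw [Hstar_vhat_eq hpq]
  exact sub_one_le_Hstar hpq hb (half_rpow_add_rpow_eq_one hpq.symm.pos) hf.1.1 hf.2
end

section
/- Fix p ∈ (1,∞) and z > 1. For every (f₁,f₂) ∈ [0,1]², |H_z(f₁,f₂) − H*(f₁,f₂)| ≤ |H_z(1,1) − H*(1,1)|. Consequently, if |H_z(1,1) − H*(1,1)| < ε for some ε > 0, then |H_z(f₁,f₂) − H*(f₁,f₂)| < ε holds simultaneously for all (f₁,f₂) ∈ [0,1]². -/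
/-- The recentered objective `H_z = G_z - (z + 1)`. -/
noncomputable def H (p z : ℝ) (f : ℝ × ℝ) : ℝ := G p z f - (z + 1)

lemma rpow_rpow_inv' {p x : ℝ} (hp : 0 < p) (hx : 0 ≤ x) : (x ^ p) ^ (1 / p) = x := by
  rw [← Real.rpow_mul hx, mul_one_div_cancel (ne_of_gt hp), Real.rpow_one]

/-- Minkowski consequence: `(b^p+1)^(1/p) ≤ (a^p+1)^(1/p) + (b-a)`. -/
lemma mink {p a b : ℝ} (hp : 1 < p) (ha : 0 ≤ a) (hab : a ≤ b) :
    (b ^ p + 1) ^ (1 / p) ≤ (a ^ p + 1) ^ (1 / p) + (b - a) := by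
  have hp0 : (0:ℝ) < p := lt_trans one_pos hp
  have h := Real.Lp_add_le_of_nonneg (s := (Finset.univ : Finset (Fin 2)))
    (f := ![a, 1]) (g := ![b - a, 0]) hp.le
    (by intro i _; fin_cases i <;> simp [ha]) (by intro i _; fin_cases i <;> simp [hab])
  simp only [Fin.sum_univ_two, Matrix.cons_val_zero, Matrix.cons_val_one, Matrix.head_cons,
    add_zero, Real.zero_rpow (ne_of_gt hp0), Real.one_rpow, add_sub_cancel] at h
  rwa [rpow_rpow_inv' hp0 (by linarith)] at h

/-- The deviation formula on `[0,1]²`. -/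
lemma dev_eq {p z : ℝ} (hp : 0 < p) (hz : 1 < z) {f₁ f₂ : ℝ}
    (h1 : f₁ ∈ Set.Icc (0:ℝ) 1) (h2 : f₂ ∈ Set.Icc (0:ℝ) 1) :
    H p z (f₁, f₂) - Hstar p (f₁, f₂) = ((z - f₁) ^ p + f₂ ^ p) ^ (1 / p) - (z - f₁) := by
  obtain ⟨h10, h11⟩ := h1
  obtain ⟨h20, h21⟩ := h2
  have : |z - f₁| = z - f₁ := abs_of_nonneg (by linarith)
  simp only [H, G, Hstar, this, abs_of_nonneg h10, abs_of_nonneg h20,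
    abs_of_nonneg (by linarith : (0:ℝ) ≤ 1 - f₂)]
  ring

lemma dev_nonneg {p z : ℝ} (hp : 0 < p) (hz : 1 < z) {f₁ f₂ : ℝ}
    (h1 : f₁ ∈ Set.Icc (0:ℝ) 1) (h2 : f₂ ∈ Set.Icc (0:ℝ) 1) :
    0 ≤ ((z - f₁) ^ p + f₂ ^ p) ^ (1 / p) - (z - f₁) := by
  have ha : (0:ℝ) ≤ z - f₁ := by linarith [h1.2]
  have h2p : (0:ℝ) ≤ f₂ ^ p := Real.rpow_nonneg h2.1 p
  have := Real.rpow_le_rpow (Real.rpow_nonneg ha p)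
    (by linarith : (z - f₁) ^ p ≤ (z - f₁) ^ p + f₂ ^ p) (by positivity : (0:ℝ) ≤ 1/p)
  rw [rpow_rpow_inv' hp ha] at this
  linarith

/-- For `p ∈ (1,∞)` and `z > 1`, the deviation `|H_z − H*|` on `[0,1]²` is maximized at
`(1,1)`; consequently `|H_z(1,1) − H*(1,1)| < ε` implies `|H_z − H*| < ε` simultaneously
on all of `[0,1]²`. -/
theorem stmt_10 (p : ℝ) (hp : 1 < p) (z : ℝ) (hz : 1 < z) :
    (∀ f₁ ∈ Set.Icc (0 : ℝ) 1, ∀ f₂ ∈ Set.Icc (0 : ℝ) 1,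
      |H p z (f₁, f₂) - Hstar p (f₁, f₂)| ≤ |H p z (1, 1) - Hstar p (1, 1)|) ∧
    ∀ ε : ℝ, 0 < ε → |H p z (1, 1) - Hstar p (1, 1)| < ε →
      ∀ f₁ ∈ Set.Icc (0 : ℝ) 1, ∀ f₂ ∈ Set.Icc (0 : ℝ) 1,
        |H p z (f₁, f₂) - Hstar p (f₁, f₂)| < ε := by
  have hp0 : (0:ℝ) < p := lt_trans one_pos hp
  have h11 : (1:ℝ) ∈ Set.Icc (0:ℝ) 1 := by constructor <;> norm_num
  have key : ∀ f₁ ∈ Set.Icc (0 : ℝ) 1, ∀ f₂ ∈ Set.Icc (0 : ℝ) 1,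
      |H p z (f₁, f₂) - Hstar p (f₁, f₂)| ≤ |H p z (1, 1) - Hstar p (1, 1)| := by
    intro f₁ hf₁ f₂ hf₂
    rw [dev_eq hp0 hz hf₁ hf₂, dev_eq hp0 hz h11 h11,
      abs_of_nonneg (dev_nonneg hp0 hz hf₁ hf₂), abs_of_nonneg (dev_nonneg hp0 hz h11 h11),
      Real.one_rpow]
    have ha : (0:ℝ) ≤ z - 1 := by linarith
    have hb : z - 1 ≤ z - f₁ := by linarith [hf₁.2]
    -- step 1 : increase f₂ to 1
    have step1 : ((z - f₁) ^ p + f₂ ^ p) ^ (1 / p) ≤ ((z - f₁) ^ p + 1) ^ (1 / p) := by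
      apply Real.rpow_le_rpow
        (add_nonneg (Real.rpow_nonneg (by linarith [hf₁.2] : (0:ℝ) ≤ z - f₁) p)
          (Real.rpow_nonneg hf₂.1 p))
      · have : f₂ ^ p ≤ 1 ^ p := Real.rpow_le_rpow hf₂.1 hf₂.2 hp0.le
        rw [Real.one_rpow] at this
        linarith
      · positivity
    have step2 := mink hp ha hb
    calc ((z - f₁) ^ p + f₂ ^ p) ^ (1 / p) - (z - f₁)
        ≤ ((z - f₁) ^ p + 1) ^ (1 / p) - (z - f₁) := by linarith
      _ ≤ ((z - 1) ^ p + 1) ^ (1 / p) - (z - 1) := by linarith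
  exact ⟨key, fun ε _ hε f₁ hf₁ f₂ hf₂ => lt_of_le_of_lt (key f₁ hf₁ f₂ hf₂) hε⟩
end

section
/- The function f ↦ max(|1 − f|, |f|) on ℝ has a unique global minimizer at f = 1/2, with minimum value 1/2; and for every fixed q ∈ (1,∞), the function f ↦ |2 − f|^q + |f|^q on ℝ has a unique global minimizer at f = 1. Consequently, in the paper's single-paper, two-reviewer construction, a reviewer with true recommendation 1 (the other reviewer reporting 0) moves the aggregate from 1/2 to 1 — exactly her true recommendation — by misreporting 2 instead of 1; this establishes that L(p,q) aggregation with q ∈ (1,∞] violates strategyproofness (Lemma 3). -/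
/-- In the single-paper, two-reviewer construction: `f ↦ max(|1 − f|, |f|)` has a unique
global minimizer at `f = 1/2` with minimum value `1/2`, and for every `q ∈ (1,∞)` the
function `f ↦ |2 − f|^q + |f|^q` has a unique global minimizer at `f = 1`. Hence by
misreporting `2` instead of `1`, a reviewer with true recommendation `1` moves the
aggregate from `1/2` to exactly `1`, so `L(p,q)` aggregation with `q ∈ (1,∞]` violates
strategyproofness. -/
theorem stmt_14 :
    (max |1 - (1 : ℝ) / 2| |(1 : ℝ) / 2| = 1 / 2) ∧
    (∀ f : ℝ, f ≠ 1 / 2 → (1 : ℝ) / 2 < max |1 - f| |f|) ∧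
    ∀ q : ℝ, 1 < q → ∀ f : ℝ, f ≠ 1 →
      |2 - (1 : ℝ)| ^ q + |(1 : ℝ)| ^ q < |2 - f| ^ q + |f| ^ q := by
  refine ⟨by norm_num, ?_, ?_⟩
  · intro f hf
    rcases lt_or_gt_of_ne hf with h | h
    · have : (1:ℝ)/2 < |1 - f| := lt_of_lt_of_le (by linarith) (le_abs_self _)
      exact lt_of_lt_of_le this (le_max_left _ _)
    · exact lt_of_lt_of_le (lt_of_lt_of_le h (le_abs_self _)) (le_max_right _ _)
  · intro q hq f hf
    have h2 : |2 - (1:ℝ)| ^ q + |(1:ℝ)| ^ q = 2 := by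
      norm_num [Real.one_rpow]
    rw [h2]
    have h2q : (2:ℝ) ≤ 2 ^ q := by
      calc (2:ℝ) = 2 ^ (1:ℝ) := (Real.rpow_one 2).symm
      _ ≤ 2 ^ q := Real.rpow_le_rpow_left_iff (by norm_num) |>.mpr hq.le
    rcases lt_trichotomy f 0 with hf0 | hf0 | hf0
    · have ha : (2:ℝ) < |2 - f| := by rw [abs_of_pos (by linarith)]; linarith
      have : (2:ℝ) ^ q < |2 - f| ^ q :=
        Real.rpow_lt_rpow (by norm_num) ha (by linarith)
      have hnn : (0:ℝ) ≤ |f| ^ q := Real.rpow_nonneg (abs_nonneg _) _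
      linarith
    · subst hf0
      have h2q' : (2:ℝ) < 2 ^ q := by
        calc (2:ℝ) = 2 ^ (1:ℝ) := (Real.rpow_one 2).symm
        _ < 2 ^ q := (Real.rpow_lt_rpow_left_iff (by norm_num)).mpr hq
      have : |(0:ℝ)| ^ q = 0 := by
        simp [Real.zero_rpow (by positivity : q ≠ 0)]
      rw [this]
      norm_num [h2q']
    · rcases le_or_gt f 2 with hf2 | hf2
      · -- f ∈ (0,2], f ≠ 1; use strict convexity
        have hc := (strictConvexOn_rpow hq).2
        have ha : (2 - f) ∈ Set.Ici (0:ℝ) := by simp; linarith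
        have hb : f ∈ Set.Ici (0:ℝ) := by simp [hf0.le]
        have hne : (2 - f) ≠ f := by intro h; apply hf; linarith
        have := hc ha hb hne (by norm_num : (0:ℝ) < 1/2) (by norm_num : (0:ℝ) < 1/2)
          (by norm_num)
        simp only [smul_eq_mul] at this
        have heq : (1/2 : ℝ) * (2 - f) + (1/2) * f = 1 := by ring
        rw [heq, Real.one_rpow] at this
        have hab : |2 - f| = 2 - f := abs_of_nonneg (by linarith)
        have hfb : |f| = f := abs_of_pos hf0
        rw [hab, hfb]; linarith
      · have hb : (2:ℝ) < |f| := by rw [abs_of_pos (by linarith)]; linarith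
        have : (2:ℝ) ^ q < |f| ^ q := Real.rpow_lt_rpow (by norm_num) hb (by linarith)
        have hnn : (0:ℝ) ≤ |2 - f| ^ q := Real.rpow_nonneg (abs_nonneg _) _
        linarith
end

section
/- Define G : ℝ² → ℝ by G(f₁,f₂) = max(|f₁|, |f₂ − 1|) + max(|2 − f₁|, |f₂ − 1|). Every global minimizer (f₁,f₂) of G with f₂ = 1 satisfies ‖(f₁,f₂)‖₂ ≥ 1, whereas the global minimizer (1/2, 1/2) satisfies ‖(1/2,1/2)‖₂ = √2/2 < 1. Hence the minimizer of G with minimum Euclidean norm has second coordinate different from 1; since both reviewers give paper 2 the overall recommendation 1, this shows that L(∞,1) aggregation (with minimum-L₂-norm tie-breaking) violates consensus (Lemma 4). -/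
/-- The `L(∞,1)` loss of the aggregate scores `(f₁, f₂)` for two papers reviewed by two
reviewers with overall recommendation matrix `[[0,1],[2,1]]`. -/
noncomputable def Ginf (f : ℝ × ℝ) : ℝ :=
  max |f.1| |f.2 - 1| + max |2 - f.1| |f.2 - 1|

lemma Ginf_val : Ginf (1 / 2, 1 / 2) = 2 := by
  have h1 : |(1:ℝ)/2| = 1/2 := by rw [abs_of_nonneg]; norm_num
  have h2 : |(1:ℝ)/2 - 1| = 1/2 := by rw [abs_of_nonpos] <;> norm_num
  have h3 : |(2:ℝ) - 1/2| = 3/2 := by rw [abs_of_nonneg] <;> norm_num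
  unfold Ginf
  simp only [h1, h2, h3]
  norm_num

lemma Ginf_ge (g : ℝ × ℝ) : 2 ≤ Ginf g := by
  have h1 : |g.1| + |2 - g.1| ≥ 2 := by
    have := abs_add_le g.1 (2 - g.1)
    have h2 : |g.1 + (2 - g.1)| = 2 := by norm_num
    linarith
  have l1 : |g.1| ≤ max |g.1| |g.2 - 1| := le_max_left _ _
  have l2 : |2 - g.1| ≤ max |2 - g.1| |g.2 - 1| := le_max_left _ _
  unfold Ginf
  linarith

lemma Ginf_min (g : ℝ × ℝ) : Ginf (1 / 2, 1 / 2) ≤ Ginf g := by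
  rw [Ginf_val]; exact Ginf_ge g

/-- Every global minimizer of `Ginf` with second coordinate `1` has Euclidean norm at
least `1`, whereas `(1/2, 1/2)` is a global minimizer of Euclidean norm `√2/2 < 1`.
Hence the minimum-`L₂`-norm global minimizer has second coordinate different from `1`,
so `L(∞,1)` aggregation violates consensus. -/
theorem stmt_16 :
    (∀ f : ℝ × ℝ, (∀ g : ℝ × ℝ, Ginf f ≤ Ginf g) → f.2 = 1 →
      1 ≤ Real.sqrt (f.1 ^ 2 + f.2 ^ 2)) ∧
    (∀ g : ℝ × ℝ, Ginf (1 / 2, 1 / 2) ≤ Ginf g) ∧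
    Real.sqrt (((1 : ℝ) / 2) ^ 2 + ((1 : ℝ) / 2) ^ 2) = Real.sqrt 2 / 2 ∧
    Real.sqrt 2 / 2 < 1 ∧
    ∀ f : ℝ × ℝ, (∀ g : ℝ × ℝ, Ginf f ≤ Ginf g) →
      (∀ g : ℝ × ℝ, (∀ h : ℝ × ℝ, Ginf g ≤ Ginf h) →
        Real.sqrt (f.1 ^ 2 + f.2 ^ 2) ≤ Real.sqrt (g.1 ^ 2 + g.2 ^ 2)) →
      f.2 ≠ 1 := by
  have norm_ge : ∀ f : ℝ × ℝ, f.2 = 1 → 1 ≤ Real.sqrt (f.1 ^ 2 + f.2 ^ 2) := by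
    intro f hf
    rw [hf]
    have h := Real.sqrt_le_sqrt (show (1:ℝ) ≤ f.1 ^ 2 + 1 ^ 2 by nlinarith [sq_nonneg f.1])
    simpa using h
  have hhalf : Real.sqrt (((1 : ℝ) / 2) ^ 2 + ((1 : ℝ) / 2) ^ 2) = Real.sqrt 2 / 2 := by
    have hsq : ((Real.sqrt 2 / 2) ^ 2 : ℝ) = 1/2 := by
      rw [div_pow, Real.sq_sqrt (by norm_num : (0:ℝ) ≤ 2)]; norm_num
    rw [show ((1:ℝ)/2) ^ 2 + ((1:ℝ)/2) ^ 2 = (Real.sqrt 2 / 2) ^ 2 by rw [hsq]; norm_num]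
    exact Real.sqrt_sq (by positivity)
  have hlt : Real.sqrt 2 / 2 < 1 := by
    nlinarith [Real.sq_sqrt (by norm_num : (0:ℝ) ≤ 2), Real.sqrt_nonneg (2:ℝ)]
  refine ⟨fun f _ hf => norm_ge f hf, Ginf_min, hhalf, hlt, ?_⟩
  intro f hmin hnorm hf2
  have h := hnorm (1/2, 1/2) Ginf_min
  have h2 := norm_ge f hf2
  simp only at h
  rw [hhalf] at h
  linarith
end

section
/- Let n ≥ 1, let y₁,…,yₙ be real numbers, fix an index i, and let y'_i be any real number. Let m = left-med(y₁,…,yₙ) and let m' be the left median of the tuple obtained by replacing y_i with y'_i. Then |y_i − m| ≤ |y_i − m'|. (This is the strategyproofness part of Lemma 1: under left-median aggregation, no reviewer can bring the aggregate score closer to her true recommendation by misreporting it.) -/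
open Finset

lemma medAux_le {n k : ℕ} (hk : k < n) (y : Fin n → ℝ) (t : ℝ)
    (h : k + 1 ≤ (Finset.univ.filter (fun j : Fin n => y j ≤ t)).card) :
    y (Tuple.sort y ⟨k, hk⟩) ≤ t := by
  set σ := Tuple.sort y
  set T : Finset (Fin n) :=
    (Finset.univ.filter (fun j : Fin n => y j ≤ t)).image σ.symm with hT
  have hcard : k + 1 ≤ T.card := by
    rw [hT, Finset.card_image_of_injective _ σ.symm.injective]; exact h
  obtain ⟨p, hpT, hkp⟩ : ∃ p ∈ T, (⟨k, hk⟩ : Fin n) ≤ p := by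
    by_contra hcon
    push_neg at hcon
    have hsub : T ⊆ Finset.Iio ⟨k, hk⟩ := fun p hp =>
      Finset.mem_Iio.mpr (hcon p hp)
    have := Finset.card_le_card hsub
    rw [Fin.card_Iio, Fin.val_mk] at this
    omega
  obtain ⟨q, hq, rfl⟩ := Finset.mem_image.mp hpT
  simp only [Finset.mem_filter] at hq
  calc y (σ ⟨k, hk⟩) ≤ y (σ (σ.symm q)) := Tuple.monotone_sort y hkp
    _ = y q := by simp
    _ ≤ t := hq.2

lemma medAux_ge {n k : ℕ} (hk : k < n) (y : Fin n → ℝ) (t : ℝ)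
    (h : (Finset.univ.filter (fun j : Fin n => y j < t)).card ≤ k) :
    t ≤ y (Tuple.sort y ⟨k, hk⟩) := by
  set σ := Tuple.sort y
  set T : Finset (Fin n) :=
    (Finset.univ.filter (fun j : Fin n => t ≤ y j)).image σ.symm with hT
  have hcomp : (Finset.univ.filter (fun j : Fin n => t ≤ y j)).card
      = n - (Finset.univ.filter (fun j : Fin n => y j < t)).card := by
    have := Finset.card_filter_add_card_filter_not
      (s := (Finset.univ : Finset (Fin n))) (p := fun j => y j < t)
    simp only [not_lt, Finset.card_univ, Fintype.card_fin] at this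
    omega
  have hcard : n - k ≤ T.card := by
    rw [hT, Finset.card_image_of_injective _ σ.symm.injective, hcomp]
    omega
  obtain ⟨p, hpT, hkp⟩ : ∃ p ∈ T, p ≤ (⟨k, hk⟩ : Fin n) := by
    by_contra hcon
    push_neg at hcon
    have hsub : T ⊆ Finset.Ioi ⟨k, hk⟩ := fun p hp =>
      Finset.mem_Ioi.mpr (hcon p hp)
    have := Finset.card_le_card hsub
    rw [Fin.card_Ioi, Fin.val_mk] at this
    omega
  obtain ⟨q, hq, rfl⟩ := Finset.mem_image.mp hpT
  simp only [Finset.mem_filter] at hq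
  calc t ≤ y q := hq.2
    _ = y (σ (σ.symm q)) := by simp
    _ ≤ y (σ ⟨k, hk⟩) := Tuple.monotone_sort y hkp

lemma card_le_med {n k : ℕ} (hk : k < n) (y : Fin n → ℝ) :
    k + 1 ≤ (Finset.univ.filter (fun j : Fin n => y j ≤ y (Tuple.sort y ⟨k, hk⟩))).card := by
  set σ := Tuple.sort y
  have hsub : (Finset.Iic (⟨k, hk⟩ : Fin n)).image σ ⊆
      Finset.univ.filter (fun j : Fin n => y j ≤ y (σ ⟨k, hk⟩)) := by
    intro p hp
    obtain ⟨q, hq, rfl⟩ := Finset.mem_image.mp hp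
    exact Finset.mem_filter.mpr ⟨Finset.mem_univ _,
      Tuple.monotone_sort y (Finset.mem_Iic.mp hq)⟩
  have := Finset.card_le_card hsub
  rwa [Finset.card_image_of_injective _ σ.injective, Fin.card_Iic] at this

lemma card_lt_med {n k : ℕ} (hk : k < n) (y : Fin n → ℝ) :
    (Finset.univ.filter (fun j : Fin n => y j < y (Tuple.sort y ⟨k, hk⟩))).card ≤ k := by
  set σ := Tuple.sort y
  have hsub : Finset.univ.filter (fun j : Fin n => y j < y (σ ⟨k, hk⟩)) ⊆
      (Finset.Iio (⟨k, hk⟩ : Fin n)).image σ := by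
    intro p hp
    have hp' := (Finset.mem_filter.mp hp).2
    refine Finset.mem_image.mpr ⟨σ.symm p, ?_, by simp⟩
    rw [Finset.mem_Iio]
    by_contra hle
    push_neg at hle
    have : y (σ ⟨k, hk⟩) ≤ y (σ (σ.symm p)) := Tuple.monotone_sort y hle
    simp at this
    exact absurd hp' (not_lt.mpr this)
  have := Finset.card_le_card hsub
  rwa [Finset.card_image_of_injective _ σ.injective, Fin.card_Iio] at this

/-- The left (lower) median of a tuple of `n` real numbers: the `⌈n/2⌉`-th smallest
value, i.e., the value at (0-indexed) position `(n−1)/2` after sorting in nondecreasing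
order. -/
noncomputable def leftMed {n : ℕ} (hn : 0 < n) (y : Fin n → ℝ) : ℝ :=
  y (Tuple.sort y ⟨(n - 1) / 2, by omega⟩)

/-- Strategyproofness of left-median aggregation: replacing reviewer `i`'s report `y i`
by any `y'ᵢ` cannot bring the left median closer to `y i`. -/
theorem stmt_18 (n : ℕ) (hn : 0 < n) (y : Fin n → ℝ) (i : Fin n) (y'i : ℝ) :
    |y i - leftMed hn y| ≤ |y i - leftMed hn (Function.update y i y'i)| := by
  set k := (n - 1) / 2 with hk
  have hkn : k < n := by omega
  set m := leftMed hn y with hm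
  set y' := Function.update y i y'i with hy'
  set m' := leftMed hn y' with hm'
  rcases lt_trichotomy (y i) m with hlt | heq | hgt
  · -- y i < m : show m ≤ m'
    have hcount : (Finset.univ.filter (fun j : Fin n => y' j < m)).card ≤ k := by
      refine le_trans (Finset.card_le_card ?_) (card_lt_med hkn y)
      intro j hj
      rcases eq_or_ne j i with rfl | hne
      · exact Finset.mem_filter.mpr ⟨Finset.mem_univ _, hlt⟩
      · have := (Finset.mem_filter.mp hj).2
        rw [hy', Function.update_of_ne hne] at this
        exact Finset.mem_filter.mpr ⟨Finset.mem_univ _, this⟩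
    have hmm' : m ≤ m' := medAux_ge hkn y' m hcount
    rw [abs_of_neg (by linarith), abs_of_neg (by linarith)]
    linarith
  · simp [heq]
  · -- y i > m : show m' ≤ m
    have hcount : k + 1 ≤ (Finset.univ.filter (fun j : Fin n => y' j ≤ m)).card := by
      refine le_trans (card_le_med hkn y) (Finset.card_le_card ?_)
      intro j hj
      have hj2 := (Finset.mem_filter.mp hj).2
      have hne : j ≠ i := by rintro rfl; exact absurd hj2 (not_le.mpr hgt)
      refine Finset.mem_filter.mpr ⟨Finset.mem_univ _, ?_⟩
      rw [hy', Function.update_of_ne hne]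
      exact hj2
    have hmm' : m' ≤ m := medAux_le hkn y' m hcount
    rw [abs_of_pos (by linarith), abs_of_pos (by linarith)]
    linarith
end
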